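/- arXiv:1906.02623 — 2 statements merged into one kernel-verified Lean document; each statement's English description precedes it below -/
import Mathlib

section
/- Let n be a natural number and let δ be the staircase Young diagram of size n, i.e. the Young diagram whose cells are exactly the pairs (i, j) of natural numbers with i + j < n, so that row i of δ has length n − i for each 0 ≤ i < n. Let λ be any Young diagram contained in δ (every cell of λ is a cell of δ). Then the multiset of row lengths of the skew shape δ/λ equals the multiset of its column lengths; that is, the multiset {(n − i) − rowLen(λ, i) : 0 ≤ i < n} equals the multiset {(n − j) − colLen(λ, j) : 0 ≤ j < n}. -/
/-- The staircase Young diagram of size `n`, whose cells are the pairs `(i, j)`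
with `i + j < n`; its row `i` has length `n − i`. -/
def staircase (n : ℕ) : YoungDiagram where
  cells := (Finset.range n ×ˢ Finset.range n).filter fun c => c.1 + c.2 < n
  isLowerSet := by
    rintro ⟨a, b⟩ ⟨c, d⟩ ⟨hac, hbd⟩ hcd
    simp only [Finset.coe_filter, Set.mem_setOf_eq, Finset.mem_product,
      Finset.mem_range] at *
    omega

-- key diagonal equivalence
lemma diag_iff (lam : YoungDiagram) (m i : ℕ) (hi : i ≤ m) :
    lam.rowLen i + i ≤ m ↔ lam.colLen (m - i) + (m - i) ≤ m := by
  have h1 : (i, m - i) ∈ lam ↔ m - i < lam.rowLen i := lam.mem_iff_lt_rowLen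
  have h2 : (i, m - i) ∈ lam ↔ i < lam.colLen (m - i) := lam.mem_iff_lt_colLen
  have h3 : m - i < lam.rowLen i ↔ i < lam.colLen (m - i) := h1.symm.trans h2
  omega

lemma diag_count (lam : YoungDiagram) (n m : ℕ) (hm : m < n) :
    ((Finset.range n).filter fun i => lam.rowLen i + i ≤ m).card
      = ((Finset.range n).filter fun j => lam.colLen j + j ≤ m).card := by
  apply Finset.card_bij' (fun i _ => m - i) (fun j _ => m - j)
  · intro i hi
    simp only [Finset.mem_filter, Finset.mem_range] at *
    have : i ≤ m := by omega
    exact ⟨by omega, ((diag_iff lam m i this).mp hi.2)⟩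
  · intro j hj
    simp only [Finset.mem_filter, Finset.mem_range] at *
    have hjm : j ≤ m := by omega
    have := (diag_iff lam m (m - j) (by omega)).mpr
    simp only [Nat.sub_sub_self hjm] at this
    exact ⟨by omega, this hj.2⟩
  · intro i hi
    simp only [Finset.mem_filter, Finset.mem_range] at hi
    omega
  · intro j hj
    simp only [Finset.mem_filter, Finset.mem_range] at hj
    omega

lemma ge_count (lam : YoungDiagram) (n k : ℕ) :
    ((Finset.range n).filter fun i => k ≤ (n - i) - lam.rowLen i).card
      = ((Finset.range n).filter fun j => k ≤ (n - j) - lam.colLen j).card := by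
  rcases Nat.eq_zero_or_pos k with rfl | hk
  · simp
  rcases lt_or_ge n k with hn | hn
  · rw [Finset.filter_false_of_mem, Finset.filter_false_of_mem] <;>
    · intro i hi
      simp only [Finset.mem_range] at hi
      omega
  · have hrw : ∀ (f : ℕ → ℕ),
        ((Finset.range n).filter fun i => k ≤ (n - i) - f i)
          = ((Finset.range n).filter fun i => f i + i ≤ n - k) := by
      intro f
      apply Finset.filter_congr
      intro i hi
      simp only [Finset.mem_range] at hi
      constructor <;> (intro; omega)
    rw [hrw, hrw]
    exact diag_count lam n (n - k) (by omega)

lemma split_count (n v : ℕ) (f : ℕ → ℕ) :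
    ((Finset.range n).filter fun i => v ≤ f i).card
      = ((Finset.range n).filter fun i => v = f i).card
        + ((Finset.range n).filter fun i => v + 1 ≤ f i).card := by
  rw [← Finset.card_union_of_disjoint]
  · congr 1
    ext i
    simp only [Finset.mem_filter, Finset.mem_union, Finset.mem_range]
    omega
  · rw [Finset.disjoint_left]
    intro i hi hi'
    simp only [Finset.mem_filter] at *
    omega

/-- If `λ` is a Young diagram contained in the staircase `δ` of size `n`, then
the multiset of row lengths of the skew shape `δ/λ` equals the multiset of its
column lengths. -/
theorem staircase_skew_rowLens_eq_colLens (n : ℕ) (lam : YoungDiagram)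
    (h : lam ≤ staircase n) :
    (Multiset.range n).map (fun i => (n - i) - lam.rowLen i)
      = (Multiset.range n).map (fun j => (n - j) - lam.colLen j) := by
  clear h
  ext v
  rw [Multiset.count_map, Multiset.count_map]
  have hconv : ∀ (p : ℕ → Prop) [DecidablePred p],
      Multiset.card (Multiset.filter p (Multiset.range n))
        = ((Finset.range n).filter p).card := fun p _ => rfl
  rw [hconv, hconv]
  have h1 := ge_count lam n v
  have h2 := ge_count lam n (v + 1)
  have s1 := split_count n v (fun i => (n - i) - lam.rowLen i)
  have s2 := split_count n v (fun j => (n - j) - lam.colLen j)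
  omega
end

section
/- Let R be a commutative ring, q ∈ R, and for k ∈ ℕ write [k]_q := ∑_{t=0}^{k−1} q^t. Let a ≥ 1, w ≥ 1 and m ≥ 0 be natural numbers, and let λ : ℕ → ℕ be weakly decreasing with λ(i) ≤ w for all i and λ(i) = 0 for all i ≥ a (a partition fitting inside an a × w rectangle). Define the conjugate partition by λ'(j) := #{ i : 0 ≤ i < a and λ(i) > j }. Then the following identity holds in R: (∏_{j=1}^{w+m−1} [j]_q) · (∏_{i=0}^{a−1} [λ(i) + i + m]_q) = (∏_{j=1}^{a+m−1} [j]_q) · (∏_{j=0}^{w−1} [λ'(j) + j + m]_q). -/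
private def conjPart (lam : ℕ → ℕ) (a : ℕ) : ℕ → ℕ :=
  fun j => ((Finset.range a).filter fun i => j < lam i).card

private lemma down_eq_range (S : Finset ℕ) (h : ∀ i k, i ≤ k → k ∈ S → i ∈ S) :
    S = Finset.range S.card := by
  rcases S.eq_empty_or_nonempty with rfl | hne
  · simp
  · have hS : S = Finset.range (S.max' hne + 1) := by
      ext i
      simp only [Finset.mem_range]
      constructor
      · intro hi; exact Nat.lt_succ_of_le (S.le_max' i hi)
      · intro hi; exact h i _ (Nat.lt_succ_iff.mp hi) (S.max'_mem hne)
    rw [hS, Finset.card_range]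

private lemma count_split (n u : ℕ) (g : ℕ → ℕ) :
    ((Finset.range n).filter fun i => u = g i).card
      + ((Finset.range n).filter fun i => u + 1 ≤ g i).card
    = ((Finset.range n).filter fun i => u ≤ g i).card := by
  rw [← Finset.card_union_of_disjoint ?hd]
  case hd =>
    rw [Finset.disjoint_left]
    intro i h1 h2
    simp only [Finset.mem_filter] at h1 h2
    omega
  congr 1
  ext i
  simp only [Finset.mem_union, Finset.mem_filter, Finset.mem_range]
  omega

private lemma split_card (n m u : ℕ) (g : ℕ → ℕ) :
    ((Finset.range n).filter fun i => u ≤ g i + i + m).card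
    = ((Finset.range n).filter fun i => u ≤ g i + i + m ∧ i + m < u).card + (n - (u - m)) := by
  have h2 : ((Finset.range n).filter fun i => u ≤ i + m) = Finset.Ico (u - m) n := by
    ext i; simp only [Finset.mem_filter, Finset.mem_range, Finset.mem_Ico]; omega
  rw [← Nat.card_Ico, ← h2, ← Finset.card_union_of_disjoint ?hd]
  case hd =>
    rw [Finset.disjoint_left]
    intro i h1 h2
    simp only [Finset.mem_filter] at h1 h2
    omega
  congr 1
  ext i
  simp only [Finset.mem_union, Finset.mem_filter, Finset.mem_range]
  omega

private lemma prod_aux {R : Type*} [CommRing R] (f : ℕ → R) (B : Finset ℕ) (n : ℕ) (g : ℕ → ℕ) :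
    (∏ j ∈ B, f j) * (∏ i ∈ Finset.range n, f (g i))
      = ((B.val + ((Finset.range n).val.map g)).map f).prod := by
  rw [Multiset.map_add, Multiset.prod_add, Multiset.map_map,
    Finset.prod_eq_multiset_prod, Finset.prod_eq_multiset_prod]
  rfl

/-- The one-deviation product identity for `q`-analogues.  With
`[k]_q = ∑_{t=0}^{k−1} q^t` in a commutative ring `R`: let `a ≥ 1`, `w ≥ 1`,
`m ≥ 0`, and let `λ` be a partition fitting inside an `a × w` rectangle
(weakly decreasing, each part `≤ w`, and `λ(i) = 0` for `i ≥ a`), with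
conjugate `λ'(j) = #{ i < a : λ(i) > j }`.  Then
`[w+m−1]_q! · ∏_{i=0}^{a−1} [λ(i)+i+m]_q
  = [a+m−1]_q! · ∏_{j=0}^{w−1} [λ'(j)+j+m]_q`. -/
theorem qfactorial_prod_partition_eq_conjugate (R : Type*) [CommRing R] (q : R)
    (a w m : ℕ) (ha : 1 ≤ a) (hw : 1 ≤ w)
    (lam : ℕ → ℕ) (hanti : Antitone lam) (hbound : ∀ i, lam i ≤ w)
    (hzero : ∀ i, a ≤ i → lam i = 0) :
    (∏ j ∈ Finset.Icc 1 (w + m - 1), ∑ t ∈ Finset.range j, q ^ t) *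
      (∏ i ∈ Finset.range a, ∑ t ∈ Finset.range (lam i + i + m), q ^ t)
    = (∏ j ∈ Finset.Icc 1 (a + m - 1), ∑ t ∈ Finset.range j, q ^ t) *
      (∏ j ∈ Finset.range w,
        ∑ t ∈ Finset.range (((Finset.range a).filter fun i => j < lam i).card + j + m),
          q ^ t) := by
  have hconj : ∀ j, ((Finset.range a).filter fun i => j < lam i).card = conjPart lam a j :=
    fun j => rfl
  simp only [hconj]
  set lam' : ℕ → ℕ := conjPart lam a with hlam'
  -- the fundamental conjugation equivalence
  have hL : ∀ j i, j < lam i ↔ i < lam' j := by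
    intro j i
    have hdown : ∀ i1 k, i1 ≤ k → k ∈ (Finset.range a).filter (fun i => j < lam i) →
        i1 ∈ (Finset.range a).filter (fun i => j < lam i) := by
      intro i1 k hik hk
      simp only [Finset.mem_filter, Finset.mem_range] at hk ⊢
      exact ⟨lt_of_le_of_lt hik hk.1, lt_of_lt_of_le hk.2 (hanti hik)⟩
    have hrange := down_eq_range _ hdown
    constructor
    · intro hj
      have hia : i < a := by
        by_contra hia
        rw [hzero i (le_of_not_gt hia)] at hj; omega
      have hmem : i ∈ (Finset.range a).filter (fun i => j < lam i) := by
        simp only [Finset.mem_filter, Finset.mem_range]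
        exact ⟨hia, hj⟩
      rw [hrange] at hmem
      simpa [hlam', conjPart] using hmem
    · intro hi
      have hmem : i ∈ (Finset.range a).filter (fun i => j < lam i) := by
        rw [hrange]
        simpa [hlam', conjPart] using hi
      simp only [Finset.mem_filter] at hmem
      exact hmem.2
  have hla : ∀ j, lam' j ≤ a := by
    intro j
    exact le_trans (Finset.card_filter_le _ _) (le_of_eq (Finset.card_range a))
  have hlw : ∀ j, w ≤ j → lam' j = 0 := by
    intro j hj
    rw [hlam']
    unfold conjPart
    rw [Finset.card_eq_zero, Finset.filter_eq_empty_iff]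
    intro i _
    exact not_lt.2 (le_trans (hbound i) hj)
  -- the core bijection
  have hcore : ∀ u, ((Finset.range a).filter fun i => u ≤ lam i + i + m ∧ i + m < u).card
      = ((Finset.range w).filter fun j => u ≤ lam' j + j + m ∧ j + m < u).card := by
    intro u
    apply Finset.card_bij (fun i _ => u - 1 - (i + m))
    · intro i hi
      simp only [Finset.mem_filter, Finset.mem_range] at hi ⊢
      obtain ⟨hia, hcond, hlt⟩ := hi
      have hj : (u - 1 - (i + m)) < lam i := by omega
      have hL1 := (hL _ i).mp hj
      have hjw : u - 1 - (i + m) < w := by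
        by_contra hjw
        have := hlw _ (le_of_not_gt hjw)
        omega
      exact ⟨hjw, by omega, by omega⟩
    · intro i1 h1 i2 h2 heq
      simp only [Finset.mem_filter, Finset.mem_range] at h1 h2
      omega
    · intro j hj
      simp only [Finset.mem_filter, Finset.mem_range] at hj
      obtain ⟨hjw, hcond, hlt⟩ := hj
      have hij : (u - 1 - (j + m)) < lam' j := by omega
      have hji := (hL j _).mpr hij
      have hia : (u - 1 - (j + m)) < a := lt_of_lt_of_le hij (hla j)
      refine ⟨u - 1 - (j + m), ?_, by omega⟩
      simp only [Finset.mem_filter, Finset.mem_range]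
      exact ⟨hia, by omega, by omega⟩
  -- the full shifted identity
  have hA : ∀ u, ((Finset.range a).filter fun i => u ≤ lam i + i + m).card + (w + m - u)
      = ((Finset.range w).filter fun j => u ≤ lam' j + j + m).card + (a + m - u) := by
    intro u
    rw [split_card a m u lam, split_card w m u lam', hcore u]
    omega
  -- the multiset identity
  have hmulti : (Finset.Icc 1 (w + m - 1)).val
        + Multiset.map (fun i => lam i + i + m) (Finset.range a).val
      = (Finset.Icc 1 (a + m - 1)).val
        + Multiset.map (fun j => lam' j + j + m) (Finset.range w).val := by
    have hicc : ∀ (n v : ℕ), Multiset.count v (Finset.Icc 1 n).val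
        = if 1 ≤ v ∧ v ≤ n then 1 else 0 := by
      intro n v
      split_ifs with h
      · exact Multiset.count_eq_one_of_mem (Finset.Icc 1 n).nodup
          (by simp only [Finset.mem_val, Finset.mem_Icc]; omega)
      · exact Multiset.count_eq_zero_of_notMem
          (by simp only [Finset.mem_val, Finset.mem_Icc]; omega)
    have hcf : ∀ (n : ℕ) (p : ℕ → Prop) [DecidablePred p],
        Multiset.card (Multiset.filter p (Finset.range n).val)
          = ((Finset.range n).filter p).card := by
      intro n p _
      rfl
    ext v
    simp only [Multiset.count_add, Multiset.count_map, hicc, hcf]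
    rcases Nat.eq_zero_or_pos v with rfl | hv
    · have e1 : ((Finset.range a).filter fun i => 0 = lam i + i + m)
          = (if lam 0 = 0 ∧ m = 0 then ({0} : Finset ℕ) else ∅) := by
        split_ifs with h
        · ext i
          simp only [Finset.mem_filter, Finset.mem_range, Finset.mem_singleton]
          constructor
          · rintro ⟨hia, hc⟩; omega
          · rintro rfl; exact ⟨ha, by omega⟩
        · ext i
          simp only [Finset.mem_filter, Finset.mem_range, Finset.notMem_empty, iff_false,
            not_and]
          intro hia hc
          apply h
          have hi0 : i = 0 := by omega
          subst hi0
          constructor <;> omega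
      have e2 : ((Finset.range w).filter fun j => 0 = lam' j + j + m)
          = (if lam' 0 = 0 ∧ m = 0 then ({0} : Finset ℕ) else ∅) := by
        split_ifs with h
        · ext j
          simp only [Finset.mem_filter, Finset.mem_range, Finset.mem_singleton]
          constructor
          · rintro ⟨hjw, hc⟩; omega
          · rintro rfl; exact ⟨hw, by omega⟩
        · ext j
          simp only [Finset.mem_filter, Finset.mem_range, Finset.notMem_empty, iff_false,
            not_and]
          intro hjw hc
          apply h
          have hj0 : j = 0 := by omega
          subst hj0
          constructor <;> omega
      have h00 := hL 0 0
      rw [e1, e2]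
      split_ifs with g1 g2 g2 <;> simp <;> omega
    · have h1 := count_split a v (fun i => lam i + i + m)
      have h2 := count_split w v (fun j => lam' j + j + m)
      have hAv := hA v
      have hAv1 := hA (v + 1)
      split_ifs <;> omega
  calc (∏ j ∈ Finset.Icc 1 (w + m - 1), ∑ t ∈ Finset.range j, q ^ t) *
      (∏ i ∈ Finset.range a, ∑ t ∈ Finset.range (lam i + i + m), q ^ t)
      = (((Finset.Icc 1 (w + m - 1)).val
          + Multiset.map (fun i => lam i + i + m) (Finset.range a).val).map
            (fun k => ∑ t ∈ Finset.range k, q ^ t)).prod :=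
        prod_aux (fun k => ∑ t ∈ Finset.range k, q ^ t) _ a (fun i => lam i + i + m)
    _ = (((Finset.Icc 1 (a + m - 1)).val
          + Multiset.map (fun j => lam' j + j + m) (Finset.range w).val).map
            (fun k => ∑ t ∈ Finset.range k, q ^ t)).prod := by rw [hmulti]
    _ = (∏ j ∈ Finset.Icc 1 (a + m - 1), ∑ t ∈ Finset.range j, q ^ t) *
      (∏ j ∈ Finset.range w,
        ∑ t ∈ Finset.range (lam' j + j + m), q ^ t) :=
        (prod_aux (fun k => ∑ t ∈ Finset.range k, q ^ t) _ w (fun j => lam' j + j + m)).symm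
end
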